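/- There exists an XOS valuation on 3 items satisfying the relative valuation constraint for which the equal-marginal-utility price vector is not a Nash equilibrium: with v(S) = max(Σ_{i∈S} f1_i, Σ_{i∈S} f2_i) where f1=(2,1,1), f2=(3,0,0), and budget 3/2, the prices (7/6, 1/6, 1/6) are not a PNE because seller 1 gains by raising its price to 4/3. -/

import Mathlib

open Finset

/-- Total price of a bundle `S`. -/
def price {n : ℕ} (p : Fin n → ℝ) (S : Finset (Fin n)) : ℝ := ∑ i ∈ S, p i

/-- Additive valuation induced by item values. -/
def addVal {n : ℕ} (v : Fin n → ℝ) (S : Finset (Fin n)) : ℝ := ∑ i ∈ S, v i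

/-- `S` is a utility-maximizing affordable bundle for the budgeted buyer:
it is within budget and has utility `v S - p S` at least that of every other
affordable bundle (unaffordable bundles have utility `-∞`). -/
def demandOpt {n : ℕ} (v : Finset (Fin n) → ℝ) (B : ℝ) (p : Fin n → ℝ)
    (S : Finset (Fin n)) : Prop :=
  price p S ≤ B ∧ ∀ T : Finset (Fin n), price p T ≤ B → v T - price p T ≤ v S - price p S

/-- Seller `i`'s utility: the posted price if the item is bought, else `0`. -/
def sellerUtil {n : ℕ} (p : Fin n → ℝ) (S : Finset (Fin n)) (i : Fin n) : ℝ :=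
  if i ∈ S then p i else 0

/-- `p` is a pure Nash equilibrium of the pricing game with buyer-choice
function `X`: no seller can strictly gain by unilaterally changing
her (nonnegative) price. -/
def isPNE {n : ℕ} (v : Finset (Fin n) → ℝ) (B : ℝ)
    (X : (Fin n → ℝ) → Finset (Fin n)) (p : Fin n → ℝ) : Prop :=
  ∀ i : Fin n, ∀ q : ℝ, 0 ≤ q →
    sellerUtil (Function.update p i q) (X (Function.update p i q)) i ≤
      sellerUtil p (X p) i

/-- The XOS valuation of the example: the maximum of the two additive
functions `f1 = (2,1,1)` and `f2 = (3,0,0)`. -/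
noncomputable def vXOS (S : Finset (Fin 3)) : ℝ :=
  max (∑ i ∈ S, (![2, 1, 1] : Fin 3 → ℝ) i) (∑ i ∈ S, (![3, 0, 0] : Fin 3 → ℝ) i)

/-! The marginal values of `vXOS` are `m = (2, 1, 1)`, from which both formulas are arithmetic.
At prices `(7/6, 1/6, 1/6)` the grand bundle costs exactly the budget and is the unique optimal
affordable bundle (utility `5/2`), so seller `0` earns `7/6`. At `(4/3, 1/6, 1/6)` the grand
bundle is unaffordable and `{0}`, `{1, 2}` tie at utility `5/3`; a buyer who breaks that tie
towards `{0}` pays seller `0` the higher price `4/3`. -/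

theorem exists_demandOpt {n : ℕ} (v : Finset (Fin n) → ℝ) {B : ℝ} (hB : 0 ≤ B)
    (q : Fin n → ℝ) : ∃ S, demandOpt v B q S := by
  obtain ⟨S, hS, hmax⟩ := exists_max_image (univ.filter fun T => price q T ≤ B)
    (fun T => v T - price q T) ⟨∅, mem_filter.mpr ⟨mem_univ _, by simpa [price] using hB⟩⟩
  exact ⟨S, (mem_filter.mp hS).2, fun T hT => hmax T (by simpa using hT)⟩

open Classical in
theorem exists_demandOpt_selection {n : ℕ} (v : Finset (Fin n) → ℝ) {B : ℝ} (hB : 0 ≤ B)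
    {q₀ : Fin n → ℝ} {S₀ : Finset (Fin n)} (h₀ : demandOpt v B q₀ S₀) :
    ∃ X : (Fin n → ℝ) → Finset (Fin n), (∀ q, demandOpt v B q (X q)) ∧ X q₀ = S₀ := by
  choose X hX using exists_demandOpt v hB
  refine ⟨Function.update X q₀ S₀, fun q => ?_, Function.update_self ..⟩
  rcases eq_or_ne q q₀ with rfl | hq
  · simpa using h₀
  · simpa [hq] using hX q

theorem vXOS_marginal (i : Fin 3) :
    vXOS univ - vXOS (univ.erase i) = ![2, 1, 1] i := by
  fin_cases i <;> norm_num [vXOS, Fin.sum_univ_three, sum_erase_eq_sub, Matrix.cons_val_two]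

theorem demandOpt_vXOS_singleton_zero : demandOpt vXOS (3/2) ![4/3, 1/6, 1/6] {0} := by
  refine ⟨by norm_num [price], fun T hT => ?_⟩
  revert hT
  fin_cases T <;> norm_num [price, vXOS, Matrix.cons_val_two]

theorem eq_univ_of_demandOpt_vXOS {S : Finset (Fin 3)}
    (h : demandOpt vXOS (3/2) ![7/6, 1/6, 1/6] S) : S = univ := by
  have h_univ := h.2 univ (by norm_num [price, Fin.sum_univ_three, Matrix.cons_val_two])
  revert h_univ
  fin_cases S <;> norm_num [price, vXOS, Fin.sum_univ_three, Matrix.cons_val_two]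
  rfl

/-- Example 4: an XOS valuation on 3 items satisfying the relative valuation
constraint (with respect to the marginal values `m i = v(N) - v(N \ {i})`),
for which the equal-marginal-utility prices `(7/6, 1/6, 1/6)` with budget
`3/2` are not a PNE: seller `1` (index `0`) gains by raising her price to
`4/3`. -/
theorem stmt17 (B : ℝ) (hB : B = 3 / 2)
    (m : Fin 3 → ℝ)
    (hm : ∀ i, m i = vXOS Finset.univ - vXOS (Finset.univ.erase i))
    (p : Fin 3 → ℝ) (hp : p = ![7 / 6, 1 / 6, 1 / 6]) :
    (∀ i, (∑ j ∈ Finset.univ.erase i, m j - B) / ((3 : ℝ) - 1) < m i) ∧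
      (∀ i, p i = (B + ((3 : ℝ) - 1) * m i - ∑ j ∈ Finset.univ.erase i, m j) / 3) ∧
      ∃ X : (Fin 3 → ℝ) → Finset (Fin 3),
        (∀ q, demandOpt vXOS B q (X q)) ∧
          sellerUtil p (X p) 0 <
            sellerUtil (Function.update p 0 (4 / 3))
              (X (Function.update p 0 (4 / 3))) 0 ∧
          ¬ isPNE vXOS B X p := by
  have hm' : m = ![2, 1, 1] := funext fun i => (hm i).trans (vXOS_marginal i)
  have hdev : Function.update p 0 (4 / 3) = ![4 / 3, 1 / 6, 1 / 6] := hp ▸ Fin.update_cons_zero ..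
  subst hB hp hm'
  obtain ⟨X, hX, hX_dev⟩ :=
    exists_demandOpt_selection vXOS (by norm_num) demandOpt_vXOS_singleton_zero
  have hgain : sellerUtil ![7 / 6, 1 / 6, 1 / 6] (X ![7 / 6, 1 / 6, 1 / 6]) 0 <
      sellerUtil ![4 / 3, 1 / 6, 1 / 6] (X ![4 / 3, 1 / 6, 1 / 6]) 0 := by
    rw [eq_univ_of_demandOpt_vXOS (hX _), hX_dev]
    norm_num [sellerUtil]
  rw [hdev]
  refine ⟨fun i => ?_, fun i => ?_, X, hX, hgain, fun hPNE => ?_⟩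
  · fin_cases i <;> norm_num [sum_erase_eq_sub, Fin.sum_univ_three, Matrix.cons_val_two]
  · fin_cases i <;> norm_num [sum_erase_eq_sub, Fin.sum_univ_three, Matrix.cons_val_two]
  · exact (hdev ▸ hPNE 0 (4 / 3) (by norm_num)).not_gt hgain
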